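/- For the full representation F : Cl(n,n) → M_{2ⁿ}(K), the grade involution acts on matrix entries by sign flips: (F(α(a)))_{ij} = (−1)^{|i ⊕ j|} (F(a))_{ij}, where i ⊕ j is the bitwise xor of the row and column indices (written as n-bit strings) and |·| is the Hamming weight. -/
import Mathlib


/-- The quadratic form of signature `(n, n)` on `(Fin n → K) × (Fin n → K)`. -/
noncomputable def Qnn (K : Type*) [Field K] (n : ℕ) :
    QuadraticForm K ((Fin n → K) × (Fin n → K)) :=
  (QuadraticMap.weightedSumSquares K (fun _ : Fin n => (1 : K))).prod
    (QuadraticMap.weightedSumSquares K (fun _ : Fin n => (-1 : K)))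

/-- The generator `eₖ` of `Cl(n,n)` (squares to `1`). -/
noncomputable def eGen (K : Type*) [Field K] (n : ℕ) (k : Fin n) :
    CliffordAlgebra (Qnn K n) :=
  CliffordAlgebra.ι (Qnn K n) (Pi.single k 1, 0)

/-- The generator `ẽₖ` of `Cl(n,n)` (squares to `-1`). -/
noncomputable def fGen (K : Type*) [Field K] (n : ℕ) (k : Fin n) :
    CliffordAlgebra (Qnn K n) :=
  CliffordAlgebra.ι (Qnn K n) (0, Pi.single k 1)

/-! ### Auxiliary number-theoretic lemmas -/

def hwt (t : ℕ) : ℕ := (Nat.digits 2 t).sum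

lemma hwt_rec (t : ℕ) : hwt t = t % 2 + hwt (t / 2) := by
  rcases Nat.eq_zero_or_pos t with h | h
  · subst h; simp [hwt]
  · rw [hwt, Nat.digits_def' (by norm_num : (1:ℕ) < 2) h, List.sum_cons]; rfl

lemma xor_div_two (x y : ℕ) : (x ^^^ y) / 2 = x / 2 ^^^ y / 2 := by
  apply Nat.eq_of_testBit_eq
  intro i
  simp [Nat.testBit_div_two, Nat.testBit_xor]

lemma hwt_xor_mod (x : ℕ) : ∀ y, hwt (x ^^^ y) % 2 = (hwt x + hwt y) % 2 := by
  induction x using Nat.strong_induction_on with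
  | _ x ih =>
    intro y
    rcases Nat.eq_zero_or_pos x with hx | hx
    · subst hx; simp [hwt]
    · have h1 := ih (x / 2) (Nat.div_lt_self hx one_lt_two) (y / 2)
      have h2 : (x ^^^ y) % 2 = (x + y) % 2 := Nat.xor_mod_two_eq
      rw [hwt_rec (x ^^^ y), hwt_rec x, hwt_rec y, xor_div_two]
      omega

def sgn (K : Type*) [Field K] (t : ℕ) : K := (-1) ^ hwt t

lemma sgn_xor (K : Type*) [Field K] (x y : ℕ) :
    sgn K (x ^^^ y) = sgn K x * sgn K y := by
  rw [sgn, sgn, sgn, ← pow_add, neg_one_pow_eq_pow_mod_two,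
    neg_one_pow_eq_pow_mod_two (hwt x + hwt y), hwt_xor_mod]

lemma sgn_zero (K : Type*) [Field K] : sgn K 0 = 1 := by simp [sgn, hwt]

lemma hwt_two_pow (m : ℕ) : hwt (2 ^ m) = 1 := by
  induction m with
  | zero => rw [hwt_rec]; simp [hwt]
  | succ m ih =>
    rw [hwt_rec, pow_succ]
    have h1 : 2 ^ m * 2 % 2 = 0 := Nat.mul_mod_left _ _
    have h2 : 2 ^ m * 2 / 2 = 2 ^ m := Nat.mul_div_cancel _ (by norm_num)
    rw [h1, h2, ih]

lemma two_pow_xor : ∀ (m t : ℕ), t < 2 ^ m → 2 ^ m ^^^ t = 2 ^ m + t := by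
  intro m
  induction m with
  | zero =>
    intro t ht
    interval_cases t
    rfl
  | succ m ih =>
    intro t ht
    have hp : (2:ℕ) ^ (m+1) = 2 ^ m * 2 := pow_succ 2 m
    have hd : (2 ^ (m+1) ^^^ t) / 2 = 2 ^ m + t / 2 := by
      rw [xor_div_two]
      have h2 : 2 ^ (m+1) / 2 = 2 ^ m := by rw [hp]; exact Nat.mul_div_cancel _ (by norm_num)
      rw [h2]
      exact ih _ (by omega)
    have hm : (2 ^ (m+1) ^^^ t) % 2 = t % 2 := by
      rw [Nat.xor_mod_two_eq]; omega
    omega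

lemma sgn_two_pow_add (K : Type*) [Field K] {m t : ℕ} (ht : t < 2 ^ m) :
    sgn K (2 ^ m + t) = - sgn K t := by
  rw [← two_pow_xor m t ht, sgn_xor]
  have : sgn K (2 ^ m) = -1 := by rw [sgn, hwt_two_pow, pow_one]
  rw [this, neg_one_mul]

lemma sgn_mul_self (K : Type*) [Field K] (t : ℕ) : sgn K t * sgn K t = 1 := by
  rw [sgn, ← pow_add]
  exact Even.neg_one_pow ⟨hwt t, rfl⟩

lemma sgn_eq_one_or (K : Type*) [Field K] (t : ℕ) : sgn K t = 1 ∨ sgn K t = -1 := by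
  rcases Nat.even_or_odd (hwt t) with h | h
  · exact Or.inl (h.neg_one_pow)
  · exact Or.inr (h.neg_one_pow)

/-! ### Algebra lemmas -/

section Alg

variable {K : Type*} [Field K]

lemma ι_succ (n : ℕ) (v : (Fin (n+1) → K) × (Fin (n+1) → K)) :
    CliffordAlgebra.ι (Qnn K (n+1)) v =
      CliffordAlgebra.ι (Qnn K (n+1))
          (Fin.snoc (Fin.init v.1) 0, Fin.snoc (Fin.init v.2) 0)
        + v.1 (Fin.last n) • eGen K (n+1) (Fin.last n)
        + v.2 (Fin.last n) • fGen K (n+1) (Fin.last n) := by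
  rw [eGen, fGen, ← map_smul, ← map_smul, ← map_add, ← map_add]
  congr 1
  refine Prod.ext ?_ ?_
  · funext i
    refine Fin.lastCases ?_ ?_ i
    · simp
    · intro i
      simp [Fin.init, Pi.single_eq_of_ne (Fin.castSucc_lt_last i).ne]
  · funext i
    refine Fin.lastCases ?_ ?_ i
    · simp
    · intro i
      simp [Fin.init, Pi.single_eq_of_ne (Fin.castSucc_lt_last i).ne]

lemma gen_form
    (incl : ∀ m : ℕ, CliffordAlgebra (Qnn K m) →ₐ[K] CliffordAlgebra (Qnn K (m + 1)))
    (hincl : ∀ (m : ℕ) (v : (Fin m → K) × (Fin m → K)),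
      incl m (CliffordAlgebra.ι (Qnn K m) v) =
        CliffordAlgebra.ι (Qnn K (m + 1)) (Fin.snoc v.1 0, Fin.snoc v.2 0))
    (n : ℕ) (v : (Fin (n+1) → K) × (Fin (n+1) → K)) :
    CliffordAlgebra.ι (Qnn K (n+1)) v =
      incl n (CliffordAlgebra.ι (Qnn K n) (Fin.init v.1, Fin.init v.2))
        + eGen K (n+1) (Fin.last n) * incl n (algebraMap K _ (v.1 (Fin.last n)))
        + fGen K (n+1) (Fin.last n) * incl n (algebraMap K _ (v.2 (Fin.last n)))
        + fGen K (n+1) (Fin.last n) * eGen K (n+1) (Fin.last n) * incl n 0 := by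
  rw [map_zero, mul_zero, add_zero, hincl, AlgHom.commutes, AlgHom.commutes,
    ← Algebra.commutes, ← Algebra.commutes, ← Algebra.smul_def, ← Algebra.smul_def]
  exact ι_succ n v

end Alg

theorem stmt16 {K : Type*} [Field K] (hK : (2 : K) ≠ 0)
    (incl : ∀ m : ℕ, CliffordAlgebra (Qnn K m) →ₐ[K] CliffordAlgebra (Qnn K (m + 1)))
    (hincl : ∀ (m : ℕ) (v : (Fin m → K) × (Fin m → K)),
      incl m (CliffordAlgebra.ι (Qnn K m) v) =
        CliffordAlgebra.ι (Qnn K (m + 1)) (Fin.snoc v.1 0, Fin.snoc v.2 0))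
    (F : ∀ m : ℕ, CliffordAlgebra (Qnn K m) →ₐ[K] Matrix (Fin (2 ^ m)) (Fin (2 ^ m)) K)
    (hF0 : ∀ x : K, F 0 (algebraMap K _ x) = algebraMap K _ x)
    (hrec : ∀ (m : ℕ) (A00 A01 A10 A11 : CliffordAlgebra (Qnn K m)),
      F (m + 1) (incl m A00
          + eGen K (m + 1) (Fin.last m) * incl m A01
          + fGen K (m + 1) (Fin.last m) * incl m A10
          + fGen K (m + 1) (Fin.last m) * eGen K (m + 1) (Fin.last m) * incl m A11) =
        (Matrix.reindex (finSumFinEquiv.trans (finCongr (by rw [pow_succ, mul_two])))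
            (finSumFinEquiv.trans (finCongr (by rw [pow_succ, mul_two]))))
          (Matrix.fromBlocks
            (F m (A00 + A11)) (F m (CliffordAlgebra.involute (A01 + A10)))
            (F m (A01 - A10)) (F m (CliffordAlgebra.involute (A00 - A11)))))
    (n : ℕ) (a : CliffordAlgebra (Qnn K n)) (i j : Fin (2 ^ n)) :
    F n (CliffordAlgebra.involute a) i j =
      (-1 : K) ^ ((Nat.digits 2 (i.val ^^^ j.val)).sum) * F n a i j := by
  -- Step 1 : generators have matrix entries supported on odd-weight positions
  have gen_zero : ∀ (m : ℕ) (v : (Fin m → K) × (Fin m → K)) (i j : Fin (2 ^ m)),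
      sgn K (i.val ^^^ j.val) = 1 → F m (CliffordAlgebra.ι (Qnn K m) v) i j = 0 := by
    intro m
    induction m with
    | zero =>
      intro v i j _
      have hv : v = 0 := Subsingleton.elim v 0
      rw [hv, map_zero, map_zero]
      rfl
    | succ m ih =>
      intro v i j hs
      have hpf : (2:ℕ) ^ m + 2 ^ m = 2 ^ (m+1) := by rw [pow_succ, mul_two]
      rw [gen_form incl hincl m v, hrec, Matrix.reindex_apply, Matrix.submatrix_apply,
        Equiv.symm_trans_apply, Equiv.symm_trans_apply]
      have hone_ne : (1 : K) ≠ -1 := by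
        intro h
        apply hK
        linear_combination h
      cases hia : finSumFinEquiv.symm ((finCongr hpf).symm i) with
      | inl a =>
        have hi : (i : ℕ) = a := by
          have h1 : (finCongr hpf).symm i = finSumFinEquiv (Sum.inl a) := by
            rw [← hia, Equiv.apply_symm_apply]
          simpa using congrArg Fin.val h1
        cases hib : finSumFinEquiv.symm ((finCongr hpf).symm j) with
        | inl b =>
          have hj : (j : ℕ) = b := by
            have h1 : (finCongr hpf).symm j = finSumFinEquiv (Sum.inl b) := by
              rw [← hib, Equiv.apply_symm_apply]
            simpa using congrArg Fin.val h1
          rw [Matrix.fromBlocks_apply₁₁, add_zero]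
          exact ih _ a b (by rwa [hi, hj] at hs)
        | inr b =>
          have hj : (j : ℕ) = 2 ^ m + b := by
            have h1 : (finCongr hpf).symm j = finSumFinEquiv (Sum.inr b) := by
              rw [← hib, Equiv.apply_symm_apply]
            have h2 := congrArg Fin.val h1
            simp at h2
            omega
          rw [Matrix.fromBlocks_apply₁₂, ← map_add, AlgHom.commutes,
            AlgHom.commutes, Matrix.algebraMap_matrix_apply]
          rw [hi, hj] at hs
          by_cases hab : a = b
          · exfalso
            rw [sgn_xor, sgn_two_pow_add K b.isLt, hab, mul_neg, sgn_mul_self] at hs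
            exact hone_ne hs.symm
          · simp [hab]
      | inr a =>
        have hi : (i : ℕ) = 2 ^ m + a := by
          have h1 : (finCongr hpf).symm i = finSumFinEquiv (Sum.inr a) := by
            rw [← hia, Equiv.apply_symm_apply]
          have h2 := congrArg Fin.val h1
          simp at h2
          omega
        cases hib : finSumFinEquiv.symm ((finCongr hpf).symm j) with
        | inl b =>
          have hj : (j : ℕ) = b := by
            have h1 : (finCongr hpf).symm j = finSumFinEquiv (Sum.inl b) := by
              rw [← hib, Equiv.apply_symm_apply]
            simpa using congrArg Fin.val h1
          rw [Matrix.fromBlocks_apply₂₁, ← map_sub, AlgHom.commutes,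
            Matrix.algebraMap_matrix_apply]
          rw [hi, hj] at hs
          by_cases hab : a = b
          · exfalso
            rw [sgn_xor, sgn_two_pow_add K a.isLt, hab, neg_mul, sgn_mul_self] at hs
            exact hone_ne hs.symm
          · simp [hab]
        | inr b =>
          have hj : (j : ℕ) = 2 ^ m + b := by
            have h1 : (finCongr hpf).symm j = finSumFinEquiv (Sum.inr b) := by
              rw [← hib, Equiv.apply_symm_apply]
            have h2 := congrArg Fin.val h1
            simp at h2
            omega
          rw [Matrix.fromBlocks_apply₂₂, sub_zero, CliffordAlgebra.involute_ι,
            map_neg, Matrix.neg_apply, neg_eq_zero]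
          apply ih
          rw [hi, hj] at hs
          rw [sgn_xor, sgn_two_pow_add K a.isLt, sgn_two_pow_add K b.isLt,
            neg_mul_neg, ← sgn_xor] at hs
          exact hs
  -- Step 2 : main induction
  have key : ∀ a : CliffordAlgebra (Qnn K n), ∀ i j : Fin (2 ^ n),
      F n (CliffordAlgebra.involute a) i j = sgn K (i.val ^^^ j.val) * F n a i j := by
    intro a
    induction a using CliffordAlgebra.induction with
    | algebraMap r =>
      intro i j
      have h1 : CliffordAlgebra.involute (algebraMap K (CliffordAlgebra (Qnn K n)) r)
          = algebraMap K _ r := AlgHom.commutes _ r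
      rw [h1, AlgHom.commutes, Matrix.algebraMap_matrix_apply]
      by_cases hij : i = j
      · subst hij
        rw [Nat.xor_self, sgn_zero, one_mul]
      · simp [hij]
    | ι x =>
      intro i j
      rw [CliffordAlgebra.involute_ι, map_neg, Matrix.neg_apply]
      rcases sgn_eq_one_or K (i.val ^^^ j.val) with h | h
      · rw [h, one_mul, gen_zero n x i j h, neg_zero]
      · rw [h, neg_one_mul]
    | mul a b ha hb =>
      intro i j
      rw [map_mul, map_mul, map_mul, Matrix.mul_apply, Matrix.mul_apply, Finset.mul_sum]
      refine Finset.sum_congr rfl fun k _ => ?_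
      rw [ha i k, hb k j]
      have hx : (i.val ^^^ k.val) ^^^ (k.val ^^^ j.val) = i.val ^^^ j.val := by
        rw [Nat.xor_assoc, ← Nat.xor_assoc k.val, Nat.xor_self, Nat.zero_xor]
      have hss : sgn K (i.val ^^^ k.val) * sgn K (k.val ^^^ j.val)
          = sgn K (i.val ^^^ j.val) := by
        rw [← sgn_xor, hx]
      rw [← hss]
      ring
    | add a b ha hb =>
      intro i j
      simp only [map_add, Matrix.add_apply, ha, hb]
      ring
  exact key a i j
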